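/- Let (T_n)_{n=0}^∞ and (l_n)_{n=0}^∞ be sequences such that: each T_n ∈ P; T_0 ⊇ T_1 ⊇ … ⊇ T_n ⊇ …; l_0 < l_1 < … < l_n < …; T_{n+1} ∩ ω^{l_n} = T_n ∩ ω^{l_n} for every n; and for every n, if the node s_n (the unique node of 𝒯 with ind(s_n) = n) belongs to T_n, then there exists t ∈ T_{n+1} with s_n ⊊ t and length(t) < l_{n+1} such that t has at least (P_{ind(t)})^n successors in T_{n+1}. Then T = ⋂_{n=0}^∞ T_n belongs to P. -/

import Mathlib

/-- `P_0 = 1` and `P_{k+1} = P_k · N_k`, where `N_0 = 1` and `N_k = 2 ^ P_k`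
for `k ≥ 1`; hence `P_k = N_0 · N_1 · … · N_{k-1}`. -/
def Pseq : ℕ → ℕ
  | 0 => 1
  | k + 1 => Pseq k * (if k = 0 then 1 else 2 ^ Pseq k)

/-- `N_0 = 1` and `N_k = 2 ^ P_k` for `k ≥ 1`
(so `N_k = 1, 2, 4, 256, 2^2048, …`). -/
def Nseq (k : ℕ) : ℕ := if k = 0 then 1 else 2 ^ Pseq k

/-- A tree: a set of finite sequences of natural numbers closed under
initial segments. -/
def IsTree (T : Set (List ℕ)) : Prop :=
  ∀ s ∈ T, ∀ t : List ℕ, t <+: s → t ∈ T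

/-- The node `t` has at least `n` successors in `T`, i.e. there are at least
`n` distinct `i` with `t ⌢ i ∈ T`. -/
def HasAtLeastSucc (T : Set (List ℕ)) (t : List ℕ) (n : ℕ) : Prop :=
  ∃ S : Finset ℕ, S.card = n ∧ ∀ i ∈ S, t ++ [i] ∈ T

/-- `(Tr, ind)` is the master tree together with its index function:
`Tr` is a tree, `ind` is a bijection of `Tr` onto `ℕ` with `ind(⟨⟩) = 0`,
`ind` respects length and (for equal lengths) the lexicographic order, and
every `s ∈ Tr` with `ind s = k` has exactly the `N_k` successors `s ⌢ i`,
`i < N_k`, in `Tr`. -/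
def IsMasterTree (Tr : Set (List ℕ)) (ind : List ℕ → ℕ) : Prop :=
  IsTree Tr ∧
  Set.BijOn ind Tr Set.univ ∧
  ind [] = 0 ∧
  (∀ s ∈ Tr, ∀ t ∈ Tr, s.length < t.length → ind s < ind t) ∧
  (∀ s ∈ Tr, ∀ t ∈ Tr, s.length = t.length → List.Lex (· < ·) s t → ind s < ind t) ∧
  (∀ s ∈ Tr, ∀ i : ℕ, s ++ [i] ∈ Tr ↔ i < Nseq (ind s))

/-- `T` belongs to the forcing notion `𝒫`: `T` is a nonempty subtree of the
master tree `Tr` such that for every `s ∈ T` and every `m` there is a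
`t ∈ T` extending `s` with at least `(P_{ind t})^m` successors in `T`. -/
def InForcing (Tr : Set (List ℕ)) (ind : List ℕ → ℕ) (T : Set (List ℕ)) : Prop :=
  T.Nonempty ∧ T ⊆ Tr ∧ IsTree T ∧
  ∀ s ∈ T, ∀ m : ℕ, ∃ t ∈ T, s <+: t ∧ HasAtLeastSucc T t (Pseq (ind t) ^ m)

/-! Nodes of `T n` of length at most `l n` are never removed later: they extend to a node of
length `l n`, which survives into `T (n + 1)` and, inductively, into every `T k`. Given
`s ∈ ⋂ₙ T n` and `m`, extend `s` inside `T L`, `L = max |s| m`, to a node `u` of length `L`.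
Then `u` lies in the intersection and `ind u ≥ |u| = L ≥ m`, so the fusion hypothesis at stage
`ind u` yields `t ⊋ u` with `(P_{ind t})^{ind u} ≥ (P_{ind t})^m` successors in `T (ind u + 1)`;
`t` and these successors have length at most `l (ind u + 1)`, so they lie in the intersection. -/

theorem Pseq_pos (k : ℕ) : 0 < Pseq k := by
  induction k with
  | zero => simp [Pseq]
  | succ k ih => exact Nat.mul_pos ih (by split <;> positivity)

theorem IsTree.nil_mem {T : Set (List ℕ)} (hT : IsTree T) (hne : T.Nonempty) : [] ∈ T :=
  let ⟨s, hs⟩ := hne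
  hT s hs [] List.nil_prefix

theorem isTree_iInter {ι : Sort*} {T : ι → Set (List ℕ)} (hT : ∀ i, IsTree (T i)) :
    IsTree (⋂ i, T i) :=
  fun s hs t hts => Set.mem_iInter.2 fun i => hT i s (Set.mem_iInter.1 hs i) t hts

theorem HasAtLeastSucc.mono {T T' : Set (List ℕ)} {t : List ℕ} {m n : ℕ}
    (h : HasAtLeastSucc T t n) (hmn : m ≤ n) (hTT' : ∀ i, t ++ [i] ∈ T → t ++ [i] ∈ T') :
    HasAtLeastSucc T' t m := by
  obtain ⟨S, hS, hSmem⟩ := h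
  obtain ⟨S', hS'S, hS'⟩ := Finset.exists_subset_card_eq (hS ▸ hmn)
  exact ⟨S', hS', fun i hi => hTT' i (hSmem i (hS'S hi))⟩

def IsPruned (T : Set (List ℕ)) : Prop :=
  ∀ s ∈ T, ∃ i, s ++ [i] ∈ T

theorem IsPruned.exists_prefix_length_eq {T : Set (List ℕ)} (hT : IsPruned T) {s : List ℕ}
    (hs : s ∈ T) {L : ℕ} (hL : s.length ≤ L) : ∃ t ∈ T, s <+: t ∧ t.length = L := by
  induction L, hL using Nat.le_induction with
  | base => exact ⟨s, hs, List.prefix_refl s, rfl⟩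
  | succ L _ ih =>
    obtain ⟨t, ht, hst, rfl⟩ := ih
    obtain ⟨i, hi⟩ := hT t ht
    exact ⟨t ++ [i], hi, hst.trans (List.prefix_append t [i]), by simp⟩

theorem InForcing.isPruned {Tr : Set (List ℕ)} {ind : List ℕ → ℕ} {T : Set (List ℕ)}
    (hT : InForcing Tr ind T) : IsPruned T := by
  intro s hs
  obtain ⟨t, ht, ⟨r, rfl⟩, S, hS, hSmem⟩ := hT.2.2.2 s hs 0
  obtain ⟨i, hi⟩ : S.Nonempty := by rw [← Finset.card_pos, hS]; simp
  cases r with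
  | nil => exact ⟨i, by simpa using hSmem i hi⟩
  | cons j r => exact ⟨j, hT.2.2.1 _ ht (s ++ [j]) ⟨r, by simp⟩⟩

theorem IsMasterTree.length_le_ind {Tr : Set (List ℕ)} {ind : List ℕ → ℕ}
    (hM : IsMasterTree Tr ind) {s : List ℕ} (hs : s ∈ Tr) : s.length ≤ ind s := by
  induction s using List.reverseRecOn with
  | nil => exact Nat.zero_le _
  | append_singleton v i ih =>
    have hv : v ∈ Tr := hM.1 _ hs v (List.prefix_append v [i])
    have hlt : ind v < ind (v ++ [i]) := hM.2.2.2.1 v hv _ hs (by simp)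
    simpa using (ih hv).trans_lt hlt

theorem mem_succ_of_length_le {T : ℕ → Set (List ℕ)} {l : ℕ → ℕ}
    (hT : ∀ n, IsTree (T n)) (hP : ∀ n, IsPruned (T n))
    (hl : ∀ n, {s ∈ T (n + 1) | s.length = l n} = {s ∈ T n | s.length = l n})
    {n : ℕ} {s : List ℕ} (hs : s ∈ T n) (hsl : s.length ≤ l n) : s ∈ T (n + 1) := by
  obtain ⟨t, ht, hst, htl⟩ := (hP n).exists_prefix_length_eq hs hsl
  have ht' : t ∈ {x ∈ T (n + 1) | x.length = l n} := hl n ▸ ⟨ht, htl⟩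
  exact hT (n + 1) t ht'.1 s hst

theorem mem_iInter_of_length_le {T : ℕ → Set (List ℕ)} {l : ℕ → ℕ}
    (hT : ∀ n, IsTree (T n)) (hP : ∀ n, IsPruned (T n)) (hanti : ∀ n, T (n + 1) ⊆ T n)
    (hmono : Monotone l)
    (hl : ∀ n, {s ∈ T (n + 1) | s.length = l n} = {s ∈ T n | s.length = l n})
    {n : ℕ} {s : List ℕ} (hs : s ∈ T n) (hsl : s.length ≤ l n) : s ∈ ⋂ k, T k := by
  refine Set.mem_iInter.2 fun k => ?_
  rcases le_total k n with hkn | hnk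
  · exact antitone_nat_of_succ_le hanti hkn hs
  · induction k, hnk using Nat.le_induction with
    | base => exact hs
    | succ k hnk ih => exact mem_succ_of_length_le hT hP hl ih (hsl.trans (hmono hnk))

/-- Fusion: if `(T_n)` is a decreasing sequence in `𝒫`, `(l_n)` is strictly
increasing, `T_{n+1} ∩ ω^{l_n} = T_n ∩ ω^{l_n}`, and for every `n`, whenever
the node `s_n` (with `ind s_n = n`) belongs to `T_n` there is `t ∈ T_{n+1}`
properly extending `s_n` with `length t < l_{n+1}` and at least
`(P_{ind t})^n` successors in `T_{n+1}`, then `⋂ₙ T_n ∈ 𝒫`. -/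
theorem fusion_mem_forcing
    (Tr : Set (List ℕ)) (ind : List ℕ → ℕ) (hM : IsMasterTree Tr ind)
    (T : ℕ → Set (List ℕ)) (l : ℕ → ℕ)
    (h1 : ∀ n, InForcing Tr ind (T n))
    (h2 : ∀ n, T (n + 1) ⊆ T n)
    (h3 : StrictMono l)
    (h4 : ∀ n, {s ∈ T (n + 1) | s.length = l n} = {s ∈ T n | s.length = l n})
    (h5 : ∀ n, ∀ sn ∈ Tr, ind sn = n → sn ∈ T n →
      ∃ t ∈ T (n + 1), sn <+: t ∧ sn ≠ t ∧ t.length < l (n + 1) ∧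
        HasAtLeastSucc (T (n + 1)) t (Pseq (ind t) ^ n)) :
    InForcing Tr ind (⋂ n, T n) := by
  have hT n := (h1 n).2.2.1
  have hP n := (h1 n).isPruned
  have stable : ∀ {n s}, s ∈ T n → s.length ≤ l n → s ∈ ⋂ k, T k :=
    mem_iInter_of_length_le hT hP h2 h3.monotone h4
  refine ⟨⟨[], stable ((hT 0).nil_mem (h1 0).1) (Nat.zero_le _)⟩,
    (Set.iInter_subset T 0).trans (h1 0).2.1, isTree_iInter hT, fun s hs m => ?_⟩
  set L := max s.length m
  obtain ⟨u, hu, hsu, hul⟩ :=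
    (hP L).exists_prefix_length_eq (Set.mem_iInter.1 hs L) (le_max_left _ _)
  have huTr : u ∈ Tr := (h1 L).2.1 hu
  have hmu : m ≤ ind u := (le_max_right _ _).trans (hul ▸ hM.length_le_ind huTr)
  have hu_all : u ∈ ⋂ k, T k := stable hu (hul ▸ h3.le_apply)
  obtain ⟨t, ht, hut, -, htl, hsucc⟩ := h5 (ind u) u huTr rfl (Set.mem_iInter.1 hu_all _)
  refine ⟨t, stable ht htl.le, hsu.trans hut,
    hsucc.mono (Nat.pow_le_pow_right (Pseq_pos _) hmu) fun i hi => stable hi ?_⟩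
  simpa using htl
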